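/- Let G be the 4×4 real matrix with entries G(r,s) = 2·Re(eᵣ·conj(eₛ)), where e₁ = 1, e₂ = i, e₃ = (1+i+j+k)/2, e₄ = (−1+(φ−1)i−φj)/2 in ℍ. Then G equals the explicit matrix with rows (2, 0, 1, −1), (0, 2, 1, φ−1), (1, 1, 2, −1), (−1, φ−1, −1, 2), and det G = φ + 1 (= φ²). -/

import Mathlib

noncomputable def φ : ℝ := (1 + Real.sqrt 5) / 2

noncomputable def e : Fin 4 → Quaternion ℝ :=
  ![1, ⟨0, 1, 0, 0⟩, ⟨1/2, 1/2, 1/2, 1/2⟩, ⟨-(1/2), (φ - 1)/2, -(φ/2), 0⟩]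

/-- The Gram matrix of the icosian basis under the polar norm pairing
`B(x,y) = 2·Re(x·conj y)`. -/
noncomputable def icosianGram : Matrix (Fin 4) (Fin 4) ℝ :=
  Matrix.of fun r s => 2 * (e r * star (e s)).re

theorem φ_sq : φ ^ 2 = φ + 1 :=
  Real.goldenRatio_sq

theorem Quaternion.re_mul_star {R : Type*} [CommRing R] (a b : Quaternion R) :
    (a * star b).re = a.re * b.re + a.imI * b.imI + a.imJ * b.imJ + a.imK * b.imK := by
  simp only [Quaternion.re_mul, Quaternion.re_star, Quaternion.imI_star, Quaternion.imJ_star,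
    Quaternion.imK_star]
  ring

theorem det_icosian_family {R : Type*} [CommRing R] (a : R) :
    (!![2, 0, 1, -1; 0, 2, 1, a; 1, 1, 2, -1; -1, a, -1, 2] : Matrix (Fin 4) (Fin 4) R).det =
      5 - 2 * a - 3 * a ^ 2 := by
  simp [Matrix.det_succ_row_zero, Fin.sum_univ_succ, Fin.succAbove]
  ring

theorem icosianGram_eq :
    icosianGram = !![2, 0, 1, -1; 0, 2, 1, φ - 1; 1, 1, 2, -1; -1, φ - 1, -1, 2] := by
  ext r s
  fin_cases r <;> fin_cases s <;>
    simp [icosianGram, e, Quaternion.re_mul_star, -Quaternion.re_mul, Quaternion.re_one,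
      Quaternion.imI_one, Quaternion.imJ_one, Quaternion.imK_one]
  -- only the entry `B(e₄, e₄)` needs `φ² = φ + 1`
  all_goals first | ring1 | linear_combination φ_sq / 2

/-- The icosian Gram matrix equals the explicit golden matrix, whose determinant
is `φ + 1 = φ²`. -/
theorem icosian_gram_matrix :
    icosianGram = !![2, 0, 1, -1; 0, 2, 1, φ - 1; 1, 1, 2, -1; -1, φ - 1, -1, 2] ∧
    icosianGram.det = φ + 1 := by
  refine ⟨icosianGram_eq, ?_⟩
  rw [icosianGram_eq, det_icosian_family]
  linear_combination (-3 : ℝ) * φ_sq
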